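/- The determinant of the generalized quantum Hilbert matrix satisfies det H_n^{(α)}(q) = [α]_q^n (∏_{k=1}^n [2k+α]_q (2k+α−1 choose k)_q^2)^{-1}. -/

import Mathlib

open Finset Matrix

noncomputable def qint (s : ℂ) (m : ℕ) : ℂ := (s ^ m - s⁻¹ ^ m) / (s - s⁻¹)

noncomputable def qbinom (s : ℂ) (m k : ℕ) : ℂ :=
  ∏ j ∈ Finset.range k, qint s (m - j) / qint s (j + 1)

/-!
With `x i = s ^ (2 i)` and `y j = s ^ (-2 (j + α))` one has
`x l - y j = s ^ (l - j - α) (s - s⁻¹) [l + j + α]`, so after rescaling rows and columns the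
matrix `([l + j + α]⁻¹)` is the Cauchy matrix `((x l - y j)⁻¹)`. Cauchy's formula
`det ((x i - y j)⁻¹) · ∏_{i,j} (x i - y j) = ∏_{i<j} (x j - x i) (y i - y j)` then gives
`det ([l + j + α]⁻¹) · ∏_{l,j ≤ n} [l + j + α] = ∏_{i<j≤n} [j - i]²`. Going from `n` to `n + 1`,
the product `∏_{l,j ≤ n} [l + j + α]` gains the factor `[2n + 2 + α]` and the square of
`∏_{j ≤ n} [n + 1 + j + α] = (2n+1+α choose n+1)_q ∏_{j ≤ n} [j + 1]`, which yields the
binomial product.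

Cauchy's formula comes from multiplying the Vandermonde matrices of `x` and of `y` by the
coefficient matrix of the polynomials `∏_{k ≠ j} (X - y k)`: the first product is the Cauchy
matrix with row `i` scaled by `∏_j (x i - y j)`, the second is diagonal.
-/

section PairProducts

variable {M : Type*} [CommMonoid M] {m : ℕ}

theorem prod_prod_erase_eq_prod_prod_Ioi (w : Fin m → Fin m → M) :
    ∏ i, ∏ j ∈ univ.erase i, w i j = ∏ i, ∏ j ∈ Ioi i, w i j * w j i := by
  have hsplit (i : Fin m) : univ.erase i = Ioi i ∪ Iio i := by
    ext j; simp [eq_comm]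
  simp_rw [hsplit, prod_union (disjoint_Ioi_Iio _), prod_mul_distrib]
  congr 1
  exact prod_comm' (by simp)

theorem prod_prod_eq_prod_diag_mul (w : Fin m → Fin m → M) :
    ∏ i, ∏ j, w i j = (∏ i, w i i) * ∏ i, ∏ j ∈ Ioi i, w i j * w j i := by
  rw [← prod_prod_erase_eq_prod_prod_Ioi, ← prod_mul_distrib]
  exact prod_congr rfl fun i _ => (mul_prod_erase _ _ (mem_univ i)).symm

theorem prod_univ_prod_univ_eq_prod_range (f : ℕ → ℕ → M) :
    ∏ i : Fin m, ∏ j : Fin m, f i j = ∏ i ∈ range m, ∏ j ∈ range m, f i j := by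
  rw [← Fin.prod_univ_eq_prod_range (fun i => ∏ j ∈ range m, f i j)]
  exact prod_congr rfl fun i _ => Fin.prod_univ_eq_prod_range (f i) m

theorem prod_univ_prod_Ioi_eq_prod_range (f : ℕ → ℕ → M) :
    ∏ i : Fin m, ∏ j ∈ Ioi i, f i j = ∏ j ∈ range m, ∏ i ∈ range j, f i j := by
  calc ∏ i : Fin m, ∏ j ∈ Ioi i, f i j = ∏ i : Fin m, ∏ j ∈ Ioo (i : ℕ) m, f i j := by
        refine prod_congr rfl fun i _ => ?_
        rw [← Fin.map_valEmbedding_Ioi, prod_map]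
        rfl
    _ = ∏ i ∈ range m, ∏ j ∈ Ioo i m, f i j :=
        Fin.prod_univ_eq_prod_range (fun i => ∏ j ∈ Ioo i m, f i j) m
    _ = ∏ j ∈ range m, ∏ i ∈ range j, f i j :=
        prod_comm' fun i j => by simp only [mem_range, mem_Ioo]; omega

theorem prod_range_prod_range_add_succ (f : ℕ → M) (n : ℕ) :
    ∏ l ∈ range (n + 2), ∏ j ∈ range (n + 2), f (l + j) =
      (∏ l ∈ range (n + 1), ∏ j ∈ range (n + 1), f (l + j)) *
        (∏ j ∈ range (n + 1), f (n + 1 + j)) ^ 2 * f (2 * (n + 1)) := by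
  simp only [prod_range_succ _ (n + 1), prod_mul_distrib, add_comm _ (n + 1), two_mul]
  rw [sq]
  ac_rfl

theorem prod_range_reflect_add_one (f : ℕ → M) (k : ℕ) :
    ∏ i ∈ range k, f (k - i) = ∏ j ∈ range k, f (j + 1) := by
  rw [← prod_range_reflect]
  exact prod_congr rfl fun j hj => by rw [mem_range] at hj; congr 1; omega

end PairProducts

section Cauchy

variable {K : Type*} [Field K] {m : ℕ}

theorem vandermonde_mul_coeff_nodal_erase (v y : Fin m → K) :
    vandermonde v * of (fun (k j : Fin m) => (Lagrange.nodal (univ.erase j) y).coeff k) =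
      of fun i j => ∏ k ∈ univ.erase j, (v i - y k) := by
  ext i j
  have hdeg : (Lagrange.nodal (univ.erase j) y).natDegree < m := by
    rw [Lagrange.natDegree_nodal, card_erase_of_mem (mem_univ j), card_univ, Fintype.card_fin]
    exact Nat.sub_lt j.pos one_pos
  rw [mul_apply, of_apply, ← Lagrange.eval_nodal, Polynomial.eval_eq_sum_range' hdeg,
    ← Fin.sum_univ_eq_sum_range (fun k => (Lagrange.nodal (univ.erase j) y).coeff k * v i ^ k)]
  simp [vandermonde_apply, mul_comm]

theorem det_cauchy (x y : Fin m → K) (hy : Function.Injective y) (hxy : ∀ i j, x i ≠ y j) :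
    (of fun i j => (x i - y j)⁻¹).det * ∏ i, ∏ j, (x i - y j) =
      ∏ i, ∏ j ∈ Ioi i, (x j - x i) * (y i - y j) := by
  set E : Matrix (Fin m) (Fin m) K :=
    of fun (k j : Fin m) => (Lagrange.nodal (univ.erase j) y).coeff k
  have hx : vandermonde x * E =
      diagonal (fun i => ∏ j, (x i - y j)) * of fun i j => (x i - y j)⁻¹ := by
    ext i j
    rw [vandermonde_mul_coeff_nodal_erase, diagonal_mul, of_apply, of_apply,
      ← mul_prod_erase _ _ (mem_univ j), mul_comm (x i - y j), mul_assoc,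
      mul_inv_cancel₀ (sub_ne_zero.mpr (hxy i j)), mul_one]
  have hy' : vandermonde y * E = diagonal (fun j => ∏ k ∈ univ.erase j, (y j - y k)) := by
    ext i j
    rw [vandermonde_mul_coeff_nodal_erase, of_apply]
    rcases eq_or_ne i j with rfl | hij
    · rw [diagonal_apply_eq]
    · rw [diagonal_apply_ne _ hij]
      exact prod_eq_zero (mem_erase.mpr ⟨hij, mem_univ i⟩) (sub_self _)
  have hVy : (vandermonde y).det ≠ 0 := det_vandermonde_ne_zero_iff.mpr hy
  have hE : E.det = ∏ i, ∏ j ∈ Ioi i, (y i - y j) := by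
    apply mul_left_cancel₀ hVy
    rw [← det_mul, hy', det_diagonal, prod_prod_erase_eq_prod_prod_Ioi, det_vandermonde,
      ← prod_mul_distrib]
    exact prod_congr rfl fun i _ => by
      rw [← prod_mul_distrib]
      exact prod_congr rfl fun j _ => mul_comm _ _
  have := congrArg det hx
  rw [det_mul, det_mul, det_diagonal, hE, det_vandermonde, ← prod_mul_distrib] at this
  rw [mul_comm, ← this]
  exact prod_congr rfl fun i _ => prod_mul_distrib.symm

theorem det_cauchy_of_sub_eq_mul (x y c d : Fin m → K) (q r : Fin m → Fin m → K)
    (hy : Function.Injective y) (hc : ∀ i, c i ≠ 0) (hd : ∀ j, d j ≠ 0)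
    (hxy : ∀ i j, x i - y j = c i * d j * q i j) (hq : ∀ i j, q i j ≠ 0)
    (hr : ∀ i j, i < j → (x j - x i) * (y i - y j) = c i * d j * (c j * d i) * r i j) :
    (of fun i j => (q i j)⁻¹).det * ∏ i, ∏ j, q i j = ∏ i, ∏ j ∈ Ioi i, r i j := by
  have hcd (i j : Fin m) : c i * d j ≠ 0 := mul_ne_zero (hc i) (hd j)
  have hC := det_cauchy x y hy fun i j =>
    sub_ne_zero.mp (by rw [hxy]; exact mul_ne_zero (hcd i j) (hq i j))
  have hM : (of fun i j => (x i - y j)⁻¹) =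
      diagonal (fun i => (c i)⁻¹) * (of fun i j => (q i j)⁻¹) *
        diagonal (fun j => (d j)⁻¹) := by
    ext i j
    simp only [diagonal_mul, mul_diagonal, of_apply, hxy, mul_inv]
    ring
  set P := ∏ i, ∏ j ∈ Ioi i, c i * d j * (c j * d i)
  have hP : P ≠ 0 := prod_ne_zero_iff.mpr fun i _ => prod_ne_zero_iff.mpr fun j _ =>
    mul_ne_zero (hcd i j) (hcd j i)
  have hLHS : ∏ i, ∏ j, (x i - y j) = (∏ i, c i * d i) * P * ∏ i, ∏ j, q i j := by
    rw [← prod_prod_eq_prod_diag_mul (fun i j => c i * d j), ← prod_mul_distrib]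
    refine prod_congr rfl fun i _ => ?_
    rw [← prod_mul_distrib]
    exact prod_congr rfl fun j _ => hxy i j
  have hRHS :
      ∏ i, ∏ j ∈ Ioi i, (x j - x i) * (y i - y j) = P * ∏ i, ∏ j ∈ Ioi i, r i j := by
    rw [← prod_mul_distrib]
    refine prod_congr rfl fun i _ => ?_
    rw [← prod_mul_distrib]
    exact prod_congr rfl fun j hj => hr i j (mem_Ioi.mp hj)
  rw [hM, det_mul, det_mul, det_diagonal, det_diagonal, hLHS, hRHS, prod_inv_distrib,
    prod_inv_distrib] at hC
  have hc' : ∏ i, c i ≠ 0 := prod_ne_zero_iff.mpr fun i _ => hc i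
  have hd' : ∏ i, d i ≠ 0 := prod_ne_zero_iff.mpr fun i _ => hd i
  apply mul_left_cancel₀ hP
  rw [← hC, prod_mul_distrib]
  field_simp

end Cauchy

section SubInv

variable {K : Type*} [Field K] {s : K}

theorem ne_zero_of_sub_inv_ne_zero (hs : s - s⁻¹ ≠ 0) : s ≠ 0 := by
  rintro rfl
  simp at hs

theorem sub_inv_ne_zero (hs : s ≠ 0) (h : s ^ 2 ≠ 1) : s - s⁻¹ ≠ 0 := by
  rw [sub_ne_zero]
  rintro hinv
  exact h (by rw [sq]; nth_rewrite 2 [hinv]; exact mul_inv_cancel₀ hs)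

end SubInv

section QInt

variable {s : ℂ}

theorem qint_ne_zero (hs : s ≠ 0) {m : ℕ} (h : (s ^ 2) ^ m ≠ 1) : qint s m ≠ 0 := by
  have hs1 : s ^ 2 ≠ 1 := fun h1 => h (by rw [h1, one_pow])
  refine div_ne_zero (sub_ne_zero.mpr fun hm => h ?_) (sub_inv_ne_zero hs hs1)
  rw [sq, mul_pow]
  nth_rewrite 2 [hm]
  rw [← mul_pow, mul_inv_cancel₀ hs, one_pow]

theorem sub_inv_mul_qint (hs : s - s⁻¹ ≠ 0) (m : ℕ) :
    (s - s⁻¹) * qint s m = s ^ m - (s ^ m)⁻¹ := by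
  rw [qint, mul_div_cancel₀ _ hs, inv_pow]

theorem sq_pow_sub_inv_sq_pow (hs : s - s⁻¹ ≠ 0) (a b : ℕ) :
    (s ^ 2) ^ a - ((s ^ 2) ^ b)⁻¹ = s ^ a * (s ^ b)⁻¹ * ((s - s⁻¹) * qint s (a + b)) := by
  have := ne_zero_of_sub_inv_ne_zero hs
  rw [sub_inv_mul_qint hs]
  field_simp
  ring

theorem sq_pow_sub_sq_pow (hs : s - s⁻¹ ≠ 0) {a b : ℕ} (h : a ≤ b) :
    (s ^ 2) ^ b - (s ^ 2) ^ a = s ^ a * s ^ b * ((s - s⁻¹) * qint s (b - a)) := by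
  have := ne_zero_of_sub_inv_ne_zero hs
  obtain ⟨d, rfl⟩ := Nat.exists_eq_add_of_le h
  rw [sub_inv_mul_qint hs, Nat.add_sub_cancel_left]
  field_simp
  ring

theorem inv_sq_pow_sub_inv_sq_pow (hs : s - s⁻¹ ≠ 0) {a b : ℕ} (h : a ≤ b) :
    ((s ^ 2) ^ a)⁻¹ - ((s ^ 2) ^ b)⁻¹ =
      (s ^ a * s ^ b)⁻¹ * ((s - s⁻¹) * qint s (b - a)) := by
  have := ne_zero_of_sub_inv_ne_zero hs
  obtain ⟨d, rfl⟩ := Nat.exists_eq_add_of_le h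
  rw [sub_inv_mul_qint hs, Nat.add_sub_cancel_left]
  field_simp
  ring

theorem det_inv_qint_add_mul_prod (hs : s - s⁻¹ ≠ 0) {m : ℕ} (u v : Fin m → ℕ)
    (hu : Monotone u) (hv : Monotone v) (huv : ∀ i j, qint s (u i + v j) ≠ 0)
    (hvv : ∀ i j, i < j → qint s (v j - v i) ≠ 0) :
    (of fun i j => (qint s (u i + v j))⁻¹).det * ∏ i, ∏ j, qint s (u i + v j) =
      ∏ i, ∏ j ∈ Ioi i, qint s (u j - u i) * qint s (v j - v i) := by
  have hs0 := ne_zero_of_sub_inv_ne_zero hs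
  have hy_ne (i j : Fin m) (h : i < j) : ((s ^ 2) ^ v i)⁻¹ ≠ ((s ^ 2) ^ v j)⁻¹ := by
    rw [← sub_ne_zero, inv_sq_pow_sub_inv_sq_pow hs (hv h.le)]
    exact mul_ne_zero (by positivity) (mul_ne_zero hs (hvv i j h))
  refine det_cauchy_of_sub_eq_mul (fun i => (s ^ 2) ^ u i) (fun j => ((s ^ 2) ^ v j)⁻¹)
    (fun i => s ^ u i * (s - s⁻¹)) (fun j => (s ^ v j)⁻¹) _ _ (fun i j hij => ?_)
    (fun _ => by positivity) (fun _ => by positivity) (fun i j => ?_) huv (fun i j h => ?_)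
  · by_contra hne
    rcases lt_or_gt_of_ne hne with h | h
    exacts [hy_ne i j h hij, hy_ne j i h hij.symm]
  · rw [sq_pow_sub_inv_sq_pow hs]
    ring
  · rw [sq_pow_sub_sq_pow hs (hu h.le), inv_sq_pow_sub_inv_sq_pow hs (hv h.le)]
    ring

theorem qbinom_mul_prod_range (m k : ℕ) (h : ∀ j < k, qint s (j + 1) ≠ 0) :
    qbinom s m k * ∏ j ∈ range k, qint s (j + 1) = ∏ j ∈ range k, qint s (m - j) := by
  rw [qbinom, prod_div_distrib, div_mul_cancel₀]
  exact prod_ne_zero_iff.mpr fun j hj => h j (mem_range.mp hj)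

theorem prod_range_prod_range_qint_add (α n : ℕ)
    (h : ∀ k, 1 ≤ k → k ≤ n → qint s k ≠ 0) :
    ∏ l ∈ range (n + 1), ∏ j ∈ range (n + 1), qint s (l + j + α) =
      qint s α * (∏ k ∈ Icc 1 n, qint s (2 * k + α) * qbinom s (2 * k + α - 1) k ^ 2) *
        ∏ j ∈ range (n + 1), ∏ i ∈ range j, qint s (j - i) ^ 2 := by
  induction n with
  | zero => simp
  | succ n ih =>
    have hbinom : ∏ j ∈ range (n + 1), qint s (n + 1 + j + α) =
        qbinom s (2 * (n + 1) + α - 1) (n + 1) * ∏ i ∈ range (n + 1), qint s (n + 1 - i) := by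
      rw [prod_range_reflect_add_one (qint s), qbinom_mul_prod_range _ _
        fun j hj => h (j + 1) (by omega) (by omega), ← prod_range_reflect]
      exact prod_congr rfl fun j hj => by rw [mem_range] at hj; congr 1; omega
    rw [prod_range_prod_range_add_succ (fun k => qint s (k + α)),
      ih fun k h1 h2 => h k h1 (by omega),
      hbinom, prod_Icc_succ_top (by omega), prod_range_succ _ (n + 1), prod_pow]
    ring

theorem det_inv_qint_add_add (hs : s - s⁻¹ ≠ 0) {n α : ℕ} (hα : 1 ≤ α)
    (hq : ∀ m, 1 ≤ m → m ≤ 2 * n + α → qint s m ≠ 0) :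
    (of fun l j : Fin (n + 1) => (qint s (l + j + α))⁻¹).det =
      (qint s α *
        ∏ k ∈ Icc 1 n, qint s (2 * k + α) * qbinom s (2 * k + α - 1) k ^ 2)⁻¹ := by
  have hcauchy := det_inv_qint_add_mul_prod hs (fun i : Fin (n + 1) => (i : ℕ))
    (fun j => (j : ℕ) + α) (fun _ _ h => h) (fun _ _ h => Nat.add_le_add_right h α)
    (fun i j => hq _ (by omega) (by omega))
    (fun i j h => hq _ (by have : (i : ℕ) < j := h; omega) (by omega))
  simp only [add_tsub_add_eq_tsub_right, ← sq, ← add_assoc] at hcauchy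
  rw [prod_univ_prod_Ioi_eq_prod_range fun i j => qint s (j - i) ^ 2,
    prod_univ_prod_univ_eq_prod_range fun l j => qint s (l + j + α),
    prod_range_prod_range_qint_add α n fun k h1 h2 => hq k h1 (by omega)] at hcauchy
  have hW : ∏ j ∈ range (n + 1), ∏ i ∈ range j, qint s (j - i) ^ 2 ≠ 0 :=
    prod_ne_zero_iff.mpr fun j hj => prod_ne_zero_iff.mpr fun i hi =>
      pow_ne_zero _ (hq _ (by rw [mem_range] at hi; omega) (by rw [mem_range] at hj; omega))
  refine eq_inv_of_mul_eq_one_left (mul_right_cancel₀ hW ?_)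
  linear_combination hcauchy

end QInt

theorem det_quantum_Hilbert (s : ℂ) (hs0 : s ≠ 0) (n α : ℕ) (hα : 1 ≤ α)
    (hroot : ∀ m : ℕ, 1 ≤ m → m ≤ 2 * n + α → (s ^ 2) ^ m ≠ 1)
    (H : Matrix (Fin (n + 1)) (Fin (n + 1)) ℂ)
    (hH : ∀ l j : Fin (n + 1), H l j = qint s α / qint s ((l : ℕ) + (j : ℕ) + α)) :
    H.det = qint s α ^ n *
      (∏ k ∈ Finset.Icc 1 n, qint s (2 * k + α) * qbinom s (2 * k + α - 1) k ^ 2)⁻¹ := by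
  have hs : s - s⁻¹ ≠ 0 := sub_inv_ne_zero hs0 (by simpa using hroot 1 le_rfl (by omega))
  have hq (m : ℕ) (h1 : 1 ≤ m) (h2 : m ≤ 2 * n + α) : qint s m ≠ 0 :=
    qint_ne_zero hs0 (hroot m h1 h2)
  have hH' : H = qint s α • of fun l j : Fin (n + 1) => (qint s (l + j + α))⁻¹ := by
    ext l j
    rw [hH, Matrix.smul_apply, of_apply, smul_eq_mul, div_eq_mul_inv]
  rw [hH', det_smul, Fintype.card_fin, det_inv_qint_add_add hs hα hq, mul_inv, pow_succ,
    mul_assoc, mul_inv_cancel_left₀ (hq α hα (by omega))]
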